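/- arXiv:1702.01914 — 2 statements merged into one kernel-verified Lean document; each statement's English description precedes it below -/
import Mathlib

section
/- For any two distinct lines L, R in projective n-space (n ≥ 2) meeting in a point, and any finite subscheme E of L ∪ R, one has deg(E ∩ L) + deg(E ∩ R) - 1 ≤ deg(E) ≤ deg(E ∩ L) + deg(E ∩ R). -/
/-!
Let `M = S ⧸ I` be the coordinate ring of `E` and `A`, `B` the images in `M` of the ideals of
the two lines, so that `deg (E ∩ L)` and `deg (E ∩ R)` are the codimensions of `A` and `B`.
A linear form `f` vanishing on `L` restricts to a coordinate on `R`, so modulo the ideal of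
`L ∪ R` the ideal of `L` is generated by `f`: thus `A = f M` while `f B = 0`, and
`dim A ≤ codim B` is the upper bound. The ideals of the two lines together cut out the reduced
point `L ∩ R`, so `A + B` has codimension at most one, which is the lower bound.
-/

open MvPolynomial Module

/-- The (scheme-theoretic) ideal of the affine line `{p + t • v : t}` in `𝔸ⁿ`,
i.e. the kernel of the substitution `X i ↦ p i + v i * T`. -/
noncomputable def lineIdeal {k : Type*} [Field k] {n : ℕ} (p v : Fin n → k) :
    Ideal (MvPolynomial (Fin n) k) :=
  RingHom.ker (MvPolynomial.aeval (R := k)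
    (fun i => Polynomial.C (p i) + Polynomial.C (v i) * Polynomial.X) :
      MvPolynomial (Fin n) k →ₐ[k] Polynomial k)

section LinearAlgebra

variable {K V : Type*} [Field K] [AddCommGroup V] [Module K V] [FiniteDimensional K V]
  {A B : Submodule K V}

theorem finrank_le_finrank_quotient_add_finrank_quotient (φ : V →ₗ[K] V)
    (hA : A ≤ LinearMap.range φ) (hB : B ≤ LinearMap.ker φ) :
    finrank K V ≤ finrank K (V ⧸ A) + finrank K (V ⧸ B) := by
  have hrange : finrank K A ≤ finrank K (LinearMap.range φ) := Submodule.finrank_mono hA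
  have hker : finrank K B ≤ finrank K (LinearMap.ker φ) := Submodule.finrank_mono hB
  have := φ.finrank_range_add_finrank_ker
  have := A.finrank_quotient_add_finrank
  have := B.finrank_quotient_add_finrank
  omega

theorem finrank_quotient_add_finrank_quotient_le (h : finrank K (V ⧸ (A ⊔ B)) ≤ 1) :
    finrank K (V ⧸ A) + finrank K (V ⧸ B) ≤ finrank K V + 1 := by
  have := Submodule.finrank_sup_add_finrank_inf_eq A B
  have := A.finrank_quotient_add_finrank
  have := B.finrank_quotient_add_finrank
  have := (A ⊔ B).finrank_quotient_add_finrank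
  omega

end LinearAlgebra

section Quotient

variable {k S : Type*} [Field k] [CommRing S] [Algebra k S]

theorem finrank_quotient_sup (I J : Ideal S) :
    finrank k (S ⧸ (I ⊔ J)) =
      finrank k ((S ⧸ I) ⧸ (J.map (Ideal.Quotient.mkₐ k I)).restrictScalars k) :=
  ((Submodule.Quotient.restrictScalarsEquiv k _).trans
    (DoubleQuot.quotQuotEquivQuotSupₐ k I J).toLinearEquiv).finrank_eq.symm

theorem finrank_le_one_of_surjective_algebraMap {A : Type*} [Ring A] [Algebra k A]
    (h : Function.Surjective (algebraMap k A)) : finrank k A ≤ 1 :=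
  finrank_le_one 1 fun a => (h a).imp fun c hc => by rw [Algebra.smul_def, mul_one, hc]

variable {I J₁ J₂ : Ideal S} [FiniteDimensional k (S ⧸ I)]

theorem finrank_quotient_le_add_of_le_span_sup {f : S} (hf : f ∈ J₁)
    (hJ₁ : J₁ ≤ Ideal.span {f} ⊔ J₁ ⊓ J₂) (hI : J₁ ⊓ J₂ ≤ I) :
    finrank k (S ⧸ I) ≤ finrank k (S ⧸ (I ⊔ J₁)) + finrank k (S ⧸ (I ⊔ J₂)) := by
  rw [finrank_quotient_sup, finrank_quotient_sup]
  set mk := Ideal.Quotient.mkₐ k I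
  have hspan : J₁.map mk ≤ Ideal.span {mk f} :=
    calc J₁.map mk ≤ (Ideal.span {f} ⊔ J₁ ⊓ J₂).map mk := Ideal.map_mono hJ₁
      _ = Ideal.span {mk f} := by
        rw [Ideal.map_sup, Ideal.map_span, Set.image_singleton,
          (Ideal.map_eq_bot_iff_le_ker mk).mpr
            fun x hx => Ideal.Quotient.eq_zero_iff_mem.mpr (hI hx), sup_bot_eq]
  refine finrank_le_finrank_quotient_add_finrank_quotient (LinearMap.mulLeft k (mk f)) ?_ ?_
  · intro x hx
    obtain ⟨a, rfl⟩ := Ideal.mem_span_singleton'.mp (hspan hx)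
    exact ⟨a, mul_comm _ _⟩
  · intro x hx
    obtain ⟨b, hb, rfl⟩ :=
      (Ideal.mem_map_iff_of_surjective _ (Ideal.Quotient.mkₐ_surjective k I)).mp hx
    rw [LinearMap.mem_ker, LinearMap.mulLeft_apply, ← map_mul]
    exact Ideal.Quotient.eq_zero_iff_mem.mpr
      (hI ⟨J₁.mul_mem_right b hf, J₂.mul_mem_left f hb⟩)

theorem finrank_quotient_sup_add_le
    (h : Function.Surjective (algebraMap k (S ⧸ (J₁ ⊔ J₂)))) :
    finrank k (S ⧸ (I ⊔ J₁)) + finrank k (S ⧸ (I ⊔ J₂)) ≤ finrank k (S ⧸ I) + 1 := by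
  rw [finrank_quotient_sup, finrank_quotient_sup]
  refine finrank_quotient_add_finrank_quotient_le ?_
  rw [← Submodule.restrictScalars_sup, ← Ideal.map_sup, ← finrank_quotient_sup]
  refine finrank_le_one_of_surjective_algebraMap fun y => ?_
  obtain ⟨x, rfl⟩ := Ideal.Quotient.mk_surjective y
  obtain ⟨c, hc⟩ := h (Ideal.Quotient.mk _ x)
  refine ⟨c, ?_⟩
  rw [← Ideal.Quotient.mk_algebraMap, Ideal.Quotient.eq] at hc ⊢
  exact Ideal.mem_sup_right hc

end Quotient

theorem MvPolynomial.surjective_algebraMap_quotient_of_X_sub_C_mem {σ R : Type*} [CommRing R]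
    {J : Ideal (MvPolynomial σ R)} (p : σ → R) (h : ∀ i, X i - C (p i) ∈ J) :
    Function.Surjective (algebraMap R (MvPolynomial σ R ⧸ J)) := by
  have hmk : Ideal.Quotient.mkₐ R J = (Algebra.ofId R _).comp (aeval p) := algHom_ext fun i => by
    rw [AlgHom.comp_apply, aeval_X, Algebra.ofId_apply, Ideal.Quotient.mkₐ_eq_mk,
      ← Ideal.Quotient.mk_algebraMap, Ideal.Quotient.eq, algebraMap_eq]
    exact h i
  intro y
  obtain ⟨x, rfl⟩ := Ideal.Quotient.mkₐ_surjective R J y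
  exact ⟨aeval p x, congr($hmk x).symm⟩

section Line

variable {k : Type*} [Field k] {n : ℕ}

noncomputable def lineParam (p v : Fin n → k) : MvPolynomial (Fin n) k →ₐ[k] Polynomial k :=
  aeval fun i => Polynomial.C (p i) + Polynomial.C (v i) * Polynomial.X

variable (p : Fin n → k) {v w : Fin n → k}

theorem mem_lineIdeal {x : MvPolynomial (Fin n) k} : x ∈ lineIdeal p v ↔ lineParam p v x = 0 :=
  Iff.rfl

theorem lineParam_X_sub_C (i : Fin n) :
    lineParam p v (X i - C (p i)) = Polynomial.C (v i) * Polynomial.X := by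
  simp [lineParam]

theorem lineParam_linearForm (c : Fin n → k) :
    lineParam p v (∑ j, C (c j) * (X j - C (p j))) =
      Polynomial.C (c ⬝ᵥ v) * Polynomial.X := by
  simp [map_sum, lineParam_X_sub_C, dotProduct, Finset.sum_mul, mul_assoc]

theorem eval_lineParam_zero (x : MvPolynomial (Fin n) k) :
    (lineParam p v x).eval 0 = eval p x := by
  have : (Polynomial.aeval (0 : k)).comp (lineParam p v) = aeval p :=
    algHom_ext fun i => by simp [lineParam]
  simpa [Polynomial.aeval_def] using congr($this x)

theorem exists_dotProduct_eq_one_eq_zero (hvw : LinearIndependent k ![v, w]) :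
    ∃ c : Fin n → k, c ⬝ᵥ v = 1 ∧ c ⬝ᵥ w = 0 := by
  have hv : v ∉ Submodule.span k {w} := by
    simpa [Submodule.mem_span_singleton] using (linearIndependent_fin2.mp hvw).2
  obtain ⟨g, hg, hgv⟩ :=
    LinearMap.exists_extend_of_notMem (0 : Submodule.span k {w} →ₗ[k] k) hv 1
  have hdot (u : Fin n → k) : (dotProductEquiv k (Fin n)).symm g ⬝ᵥ u = g u :=
    congr($((dotProductEquiv k (Fin n)).apply_symm_apply g) u)
  exact ⟨_, (hdot v).trans hgv,
    (hdot w).trans (LinearMap.congr_fun hg ⟨w, Submodule.mem_span_singleton_self w⟩)⟩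

theorem exists_mem_lineIdeal_lineParam_eq_X (hvw : LinearIndependent k ![v, w]) :
    ∃ f ∈ lineIdeal p w, lineParam p v f = Polynomial.X := by
  obtain ⟨c, hcv, hcw⟩ := exists_dotProduct_eq_one_eq_zero hvw
  refine ⟨∑ j, C (c j) * (X j - C (p j)), ?_, ?_⟩
  · rw [mem_lineIdeal, lineParam_linearForm, hcw, map_zero, zero_mul]
  · rw [lineParam_linearForm, hcv, map_one, one_mul]

theorem lineIdeal_le_span_sup_inf {f : MvPolynomial (Fin n) k} (hf : f ∈ lineIdeal p v)
    (hfX : lineParam p w f = Polynomial.X) :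
    lineIdeal p v ≤ Ideal.span {f} ⊔ lineIdeal p v ⊓ lineIdeal p w := by
  intro x hx
  obtain ⟨h, hh⟩ : Polynomial.X ∣ lineParam p w x := by
    rw [Polynomial.X_dvd_iff, Polynomial.coeff_zero_eq_eval_zero, eval_lineParam_zero,
      ← eval_lineParam_zero p (v := v), (mem_lineIdeal p).mp hx, Polynomial.eval_zero]
  have hg : lineParam p w (Polynomial.aeval f h) = h := by
    rw [← Polynomial.aeval_algHom_apply, hfX, Polynomial.aeval_X_left_apply]
  rw [← add_sub_cancel (Polynomial.aeval f h * f) x]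
  refine Submodule.add_mem_sup (Ideal.mul_mem_left _ _ (Ideal.mem_span_singleton_self f))
    ⟨sub_mem hx (Ideal.mul_mem_left _ _ hf), (mem_lineIdeal p).mpr ?_⟩
  rw [map_sub, map_mul, hg, hfX, hh, mul_comm, sub_self]

theorem X_sub_C_mem_lineIdeal_sup (hvw : LinearIndependent k ![v, w]) (i : Fin n) :
    X i - C (p i) ∈ lineIdeal p v ⊔ lineIdeal p w := by
  obtain ⟨f, hf, hfX⟩ := exists_mem_lineIdeal_lineParam_eq_X p hvw
  have hv : X i - C (p i) - C (v i) * f ∈ lineIdeal p v := by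
    rw [mem_lineIdeal, map_sub, map_mul, lineParam_X_sub_C, hfX]
    simp [lineParam]
  rw [← sub_add_cancel (X i - C (p i)) (C (v i) * f)]
  exact Submodule.add_mem_sup hv (Ideal.mul_mem_left _ _ hf)

end Line

theorem stmt5_general (k : Type*) [Field k] (n : ℕ)
    (p v w : Fin n → k) (hvw : LinearIndependent k ![v, w])
    (I : Ideal (MvPolynomial (Fin n) k))
    (hE : lineIdeal p v ⊓ lineIdeal p w ≤ I)
    [FiniteDimensional k (MvPolynomial (Fin n) k ⧸ I)] :
    finrank k (MvPolynomial (Fin n) k ⧸ (I ⊔ lineIdeal p v)) +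
        finrank k (MvPolynomial (Fin n) k ⧸ (I ⊔ lineIdeal p w)) - 1 ≤
      finrank k (MvPolynomial (Fin n) k ⧸ I) ∧
    finrank k (MvPolynomial (Fin n) k ⧸ I) ≤
      finrank k (MvPolynomial (Fin n) k ⧸ (I ⊔ lineIdeal p v)) +
        finrank k (MvPolynomial (Fin n) k ⧸ (I ⊔ lineIdeal p w)) := by
  obtain ⟨f, hf, hfX⟩ :=
    exists_mem_lineIdeal_lineParam_eq_X p (LinearIndependent.pair_symm_iff.mp hvw)
  have upper :=
    finrank_quotient_le_add_of_le_span_sup (k := k) hf (lineIdeal_le_span_sup_inf p hf hfX) hE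
  have lower := finrank_quotient_sup_add_le (k := k) (I := I)
    (surjective_algebraMap_quotient_of_X_sub_C_mem p (X_sub_C_mem_lineIdeal_sup p hvw))
  omega

/-- Let `L` and `R` be two distinct lines in projective `n`-space (`n ≥ 2`) meeting in a point
(in an affine chart containing the zero-dimensional scheme `E`: `L = {p + t•v}`,
`R = {p + t•w}` with `v, w` linearly independent), and let `E` be a finite subscheme of
`L ∪ R`, given by an ideal `I` containing the ideal of `L ∪ R`.  Then
`deg(E∩L) + deg(E∩R) - 1 ≤ deg(E) ≤ deg(E∩L) + deg(E∩R)`, where degrees are lengths,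
i.e. `k`-dimensions of the corresponding affine coordinate rings. -/
theorem stmt5 (k : Type*) [Field k] [IsAlgClosed k] (n : ℕ) (hn : 2 ≤ n)
    (p v w : Fin n → k) (hvw : LinearIndependent k ![v, w])
    (I : Ideal (MvPolynomial (Fin n) k))
    (hE : lineIdeal p v ⊓ lineIdeal p w ≤ I)
    [FiniteDimensional k (MvPolynomial (Fin n) k ⧸ I)] :
    finrank k (MvPolynomial (Fin n) k ⧸ (I ⊔ lineIdeal p v)) +
        finrank k (MvPolynomial (Fin n) k ⧸ (I ⊔ lineIdeal p w)) - 1 ≤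
      finrank k (MvPolynomial (Fin n) k ⧸ I) ∧
    finrank k (MvPolynomial (Fin n) k ⧸ I) ≤
      finrank k (MvPolynomial (Fin n) k ⧸ (I ⊔ lineIdeal p v)) +
        finrank k (MvPolynomial (Fin n) k ⧸ (I ⊔ lineIdeal p w)) :=
  stmt5_general k n p v w hvw I hE
end

section
/- On the projective line ℙ¹ over a field, for the degree-d Veronese embedding ν_d : ℙ¹ → ℙ^d (d ≥ 2), a point P of ⟨ν_d(A)⟩ for A a degree-2 non-reduced divisor 2O, with P ≠ ν_d(O), has rank exactly d: P ∈ ⟨ν_d(S)⟩ for some set S of d distinct points of ℙ¹ not containing O, and for no set of fewer than d points. -/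
/-!
For a primitive `d`-th root of unity `ζ`, orthogonality of characters shows that
`∑ⱼ ζʲ (ζʲ x + y)^d` retains only the monomial `x^{d-1} y`, with coefficient `d²`.

Conversely, if `x^{d-1} y = ∑ᵢ cᵢ (αᵢ x + βᵢ y)^d`, comparing coefficients shows that the moments
`S m = ∑ᵢ cᵢ αᵢ^m βᵢ^(d-m)` vanish for `m ≤ d`, except `S (d-1) = 1/d`. Moments of an `r`-term sum
satisfy the linear recurrence whose characteristic polynomial is `∏ (X - τ)` over the distinct
ratios `τ = αᵢ/βᵢ`, of order `e ≤ r`; if `r < d`, running it over the window ending at `d - 1`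
gives `1/d = 0`.
-/

open MvPolynomial

noncomputable def linForm2 {k : Type*} [Field k] (a : Fin 2 → k) : MvPolynomial (Fin 2) k :=
  ∑ i, MvPolynomial.C (a i) * MvPolynomial.X i

section

variable {k : Type*} [Field k]

lemma linForm2_eq (a : Fin 2 → k) : linForm2 a = C (a 0) * X 0 + C (a 1) * X 1 := by
  simp [linForm2, Fin.sum_univ_two]

lemma linForm2_pow (a : Fin 2 → k) (d : ℕ) :
    linForm2 a ^ d = ∑ m ∈ Finset.range (d + 1), (a 0 ^ m * a 1 ^ (d - m) * d.choose m) •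
      (X 0 ^ m * X 1 ^ (d - m) : MvPolynomial (Fin 2) k) := by
  rw [linForm2_eq, add_pow]
  refine Finset.sum_congr rfl fun m _ => ?_
  rw [smul_eq_C_mul]
  simp only [mul_pow, ← C_pow, map_mul, map_natCast]
  ring

def binaryMoment {ι : Type*} [Fintype ι] (c : ι → k) (a : ι → Fin 2 → k) (d m : ℕ) : k :=
  ∑ i, c i * (a i 0 ^ m * a i 1 ^ (d - m))

lemma sum_smul_linForm2_pow {ι : Type*} [Fintype ι] (c : ι → k) (a : ι → Fin 2 → k) (d : ℕ) :
    ∑ i, c i • linForm2 (a i) ^ d = ∑ m ∈ Finset.range (d + 1),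
      (binaryMoment c a d m * d.choose m) • (X 0 ^ m * X 1 ^ (d - m)) := by
  simp_rw [linForm2_pow, Finset.smul_sum, smul_smul]
  rw [Finset.sum_comm]
  refine Finset.sum_congr rfl fun m _ => ?_
  rw [← Finset.sum_smul, binaryMoment, Finset.sum_mul]
  congr 1
  exact Finset.sum_congr rfl fun i _ => by ring

lemma IsPrimitiveRoot.sum_pow_mul_eq_ite {ζ : k} {d : ℕ} (hζ : IsPrimitiveRoot ζ d) (t : ℕ) :
    ∑ j ∈ Finset.range d, ζ ^ (j * t) = if d ∣ t then (d : k) else 0 := by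
  simp_rw [mul_comm _ t, pow_mul]
  split_ifs with h
  · simp [(hζ.pow_eq_one_iff_dvd t).2 h]
  · have hne : ζ ^ t ≠ 1 := fun e => h ((hζ.pow_eq_one_iff_dvd t).1 e)
    rw [geom_sum_eq hne, ← pow_mul, mul_comm, pow_mul, hζ.pow_eq_one, one_pow, sub_self,
      zero_div]

lemma binaryMoment_rootsOfUnity {ζ : k} {d : ℕ} (hζ : IsPrimitiveRoot ζ d) (m : ℕ) :
    binaryMoment (fun j : Fin d => ζ ^ (j : ℕ) / (d : k) ^ 2) (fun j => ![ζ ^ (j : ℕ), 1]) d m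
      = if d ∣ m + 1 then (d : k)⁻¹ else 0 := by
  have hsum := hζ.sum_pow_mul_eq_ite (m + 1)
  rw [← Fin.sum_univ_eq_sum_range (fun j => ζ ^ (j * (m + 1)))] at hsum
  simp only [binaryMoment, Matrix.cons_val_zero, Matrix.cons_val_one, one_pow, mul_one]
  have hterm : ∀ j : Fin d, ζ ^ (j : ℕ) / (d : k) ^ 2 * (ζ ^ (j : ℕ)) ^ m
      = ζ ^ ((j : ℕ) * (m + 1)) / (d : k) ^ 2 := fun j => by ring
  rw [Finset.sum_congr rfl fun j _ => hterm j, ← Finset.sum_div, hsum]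
  split_ifs
  · rw [sq, div_self_mul_self']
  · exact zero_div _

lemma X_pow_mul_X_eq_sum_rootsOfUnity {ζ : k} {d : ℕ} (hd : 2 ≤ d)
    (hζ : IsPrimitiveRoot ζ d) :
    (X 0 ^ (d - 1) * X 1 : MvPolynomial (Fin 2) k)
      = ∑ j : Fin d, (ζ ^ (j : ℕ) / (d : k) ^ 2) • linForm2 ![ζ ^ (j : ℕ), 1] ^ d := by
  have : NeZero d := ⟨by omega⟩
  have hdk : (d : k) ≠ 0 := hζ.neZero'.out
  rw [sum_smul_linForm2_pow, Finset.sum_eq_single (d - 1)]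
  · rw [binaryMoment_rootsOfUnity hζ, if_pos (by rw [Nat.sub_add_cancel (by omega)]),
      Nat.choose_symm (by omega), Nat.choose_one_right, inv_mul_cancel₀ hdk, one_smul,
      Nat.sub_sub_self (by omega), pow_one]
  · intro m hm hne
    rw [Finset.mem_range] at hm
    have hndvd : ¬ d ∣ m + 1 := fun hdvd =>
      hne (by have := Nat.eq_of_dvd_of_lt_two_mul m.succ_ne_zero hdvd (by omega); omega)
    rw [binaryMoment_rootsOfUnity hζ, if_neg hndvd, zero_mul, zero_smul]
  · simp

lemma binaryMoment_of_X_pow_mul_X_eq [CharZero k] {ι : Type*} [Fintype ι] {c : ι → k}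
    {a : ι → Fin 2 → k} {d : ℕ} (hd : 0 < d)
    (h : (X 0 ^ (d - 1) * X 1 : MvPolynomial (Fin 2) k) = ∑ i, c i • linForm2 (a i) ^ d)
    {m : ℕ} (hm : m ≤ d) : binaryMoment c a d m = if m = d - 1 then (d : k)⁻¹ else 0 := by
  -- dehomogenize at `y = 1`, where coefficients are read off in `k[X]`
  have hcoeff :=
    congrArg (fun f => (aeval (![Polynomial.X, 1] : Fin 2 → Polynomial k) f).coeff m) h
  rw [sum_smul_linForm2_pow] at hcoeff
  simp only [map_mul, map_pow, map_sum, map_smul, aeval_X, Matrix.cons_val_zero,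
    Matrix.cons_val_one, Matrix.cons_val_fin_one, one_pow, mul_one, Polynomial.coeff_X_pow,
    Polynomial.finsetSum_coeff, Polynomial.coeff_smul, smul_eq_mul, mul_ite, mul_zero,
    Finset.sum_ite_eq, Finset.mem_range, Order.lt_add_one_iff] at hcoeff
  rw [if_pos hm] at hcoeff
  split_ifs with hmd
  · subst hmd
    rw [Nat.choose_symm hd, Nat.choose_one_right, if_pos rfl] at hcoeff
    exact eq_inv_of_mul_eq_one_left hcoeff.symm
  · rw [if_neg hmd, eq_comm, mul_eq_zero] at hcoeff
    exact hcoeff.resolve_right (Nat.cast_ne_zero.2 (Nat.choose_pos hm).ne')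

open Polynomial in
lemma sum_coeff_mul_pow_mul_pow_eq_zero (p : k[X]) {u v : k} (hp : v ≠ 0 → p.IsRoot (u / v))
    {n N : ℕ} (hN : n + p.natDegree < N) :
    ∑ j ∈ Finset.range (p.natDegree + 1), p.coeff j * (u ^ (n + j) * v ^ (N - (n + j))) = 0 := by
  by_cases hv : v = 0
  · refine Finset.sum_eq_zero fun j hj => ?_
    rw [Finset.mem_range] at hj
    rw [hv, zero_pow (by omega), mul_zero, mul_zero]
  · have hterm : ∀ j ∈ Finset.range (p.natDegree + 1),
        p.coeff j * (u ^ (n + j) * v ^ (N - (n + j)))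
          = u ^ n * v ^ (N - n) * (p.coeff j * (u / v) ^ j) := by
      intro j hj
      rw [Finset.mem_range] at hj
      rw [show N - n = N - (n + j) + j by omega, pow_add, pow_add, div_pow]
      field_simp
    rw [Finset.sum_congr rfl hterm, ← Finset.mul_sum, ← eval_eq_sum_range, (hp hv).eq_zero,
      mul_zero]

open Polynomial in
lemma exists_monic_recurrence_binaryMoment {ι : Type*} [Fintype ι] (c : ι → k)
    (a : ι → Fin 2 → k) :
    ∃ p : k[X], p.Monic ∧ p.natDegree ≤ Fintype.card ι ∧ ∀ {n N : ℕ}, n + p.natDegree < N →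
      ∑ j ∈ Finset.range (p.natDegree + 1), p.coeff j * binaryMoment c a N (n + j) = 0 := by
  classical
  refine ⟨∏ τ ∈ Finset.univ.image (fun i => a i 0 / a i 1), (Polynomial.X - Polynomial.C τ),
    monic_prod_of_monic _ _ fun τ _ => monic_X_sub_C τ, ?_, ?_⟩
  · rw [natDegree_prod_of_monic _ _ fun τ _ => monic_X_sub_C τ]
    simpa using Finset.card_image_le.trans_eq Finset.card_univ
  · intro n N hN
    simp_rw [binaryMoment, Finset.mul_sum]
    rw [Finset.sum_comm]
    refine Finset.sum_eq_zero fun i _ => ?_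
    simp_rw [mul_left_comm _ (c i), ← Finset.mul_sum]
    rw [sum_coeff_mul_pow_mul_pow_eq_zero _ (fun _ => ?_) hN, mul_zero]
    rw [IsRoot, Polynomial.eval_prod]
    exact Finset.prod_eq_zero (Finset.mem_image_of_mem _ (Finset.mem_univ i)) (by simp)

theorem le_card_of_X_pow_mul_X_eq_sum [CharZero k] {ι : Type*} [Fintype ι] {c : ι → k}
    {a : ι → Fin 2 → k} {d : ℕ}
    (h : (X 0 ^ (d - 1) * X 1 : MvPolynomial (Fin 2) k) = ∑ i, c i • linForm2 (a i) ^ d) :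
    d ≤ Fintype.card ι := by
  by_contra! hlt
  have hd : 0 < d := by omega
  obtain ⟨p, hmonic, hdeg, hrec⟩ := exists_monic_recurrence_binaryMoment c a
  have hsum := hrec (n := d - 1 - p.natDegree) (N := d) (by omega)
  rw [Finset.sum_eq_single p.natDegree] at hsum
  · rw [binaryMoment_of_X_pow_mul_X_eq hd h (by omega), if_pos (by omega),
      hmonic.coeff_natDegree, one_mul] at hsum
    exact inv_ne_zero (Nat.cast_ne_zero.2 hd.ne') hsum
  · intro j hj hne
    rw [Finset.mem_range] at hj
    rw [binaryMoment_of_X_pow_mul_X_eq hd h (by omega), if_neg (by omega), mul_zero]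
  · simp

end

/-- (Sylvester.)  For `d ≥ 2`, the binary form `x^{d-1} y` — the generic point of
`⟨ν_d(2O)⟩ \ {ν_d(O)}` for the double point `2O` at `O = [1:0]` — has rank exactly `d`:
it is a linear combination of `d`-th powers of `d` pairwise non-proportional linear forms,
none of them vanishing at `O` (i.e. none proportional to `x`, so the corresponding `d`
distinct points of `ℙ¹` avoid `O`), and it is not a linear combination of fewer than `d`
such powers. -/
theorem stmt16 (k : Type*) [Field k] [IsAlgClosed k] [CharZero k] (d : ℕ) (hd : 2 ≤ d) :
    (∃ (c : Fin d → k) (a : Fin d → (Fin 2 → k)),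
      (∀ i, a i ≠ 0) ∧
      (∀ i j, i ≠ j → ∀ t : k, a i ≠ t • a j) ∧
      (∀ i, a i 1 ≠ 0) ∧
      (MvPolynomial.X 0 ^ (d - 1) * MvPolynomial.X 1 : MvPolynomial (Fin 2) k) =
        ∑ i, c i • linForm2 (a i) ^ d) ∧
    (∀ (r : ℕ) (c : Fin r → k) (a : Fin r → (Fin 2 → k)),
      (MvPolynomial.X 0 ^ (d - 1) * MvPolynomial.X 1 : MvPolynomial (Fin 2) k) =
        ∑ i, c i • linForm2 (a i) ^ d → d ≤ r) := by
  have : NeZero (d : k) := ⟨Nat.cast_ne_zero.2 (by omega)⟩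
  obtain ⟨ζ, hζ⟩ := HasEnoughRootsOfUnity.exists_primitiveRoot k d
  refine ⟨⟨fun j => ζ ^ (j : ℕ) / (d : k) ^ 2, fun j => ![ζ ^ (j : ℕ), 1],
      fun i h => by simpa using congrFun h 1, ?_, fun i => by simp,
      X_pow_mul_X_eq_sum_rootsOfUnity hd hζ⟩,
    fun r c a h => by simpa using le_card_of_X_pow_mul_X_eq_sum h⟩
  intro i j hij t h
  have ht : t = 1 := by simpa using (congrFun h 1).symm
  have hpow : ζ ^ (i : ℕ) = ζ ^ (j : ℕ) := by simpa [ht] using congrFun h 0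
  exact hij (Fin.ext (hζ.pow_inj i.isLt j.isLt hpow))
end
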